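/- arXiv:2208.05691 — 9 statements merged into one kernel-verified Lean document; each statement's English description precedes it below -/
import Mathlib

section
/- Let θ ∈ (0, π) and φ ∈ (−π/2, π/2), and set Ψ = sin θ cos φ (so Ψ > 0), Φ = sin θ sin φ, Ω = cos θ. Let K > 0, K_y > 0 and a₀, b₀, c₀ > 0 be real numbers. Then the triple integral ∫_{−c₀}^{c₀} ∫_{−b₀}^{b₀} ∫_{−a₀}^{a₀} [1 − 2aΩ − 2KbΩ − 2K_y c Φ + a² + K²b² + 2Kab + K_y²c²]^{−3/2} da db dc equals (1/(K·K_y)) · [ F(K_y c₀ − Φ, K b₀ + a₀ − Ω) − F(K_y c₀ − Φ, K b₀ − a₀ − Ω) + F(K_y c₀ − Φ, K b₀ + a₀ + Ω) − F(K_y c₀ − Φ, K b₀ − a₀ + Ω) + F(K_y c₀ + Φ, K b₀ + a₀ − Ω) − F(K_y c₀ + Φ, K b₀ − a₀ − Ω) + F(K_y c₀ + Φ, K b₀ + a₀ + Ω) − F(K_y c₀ + Φ, K b₀ − a₀ + Ω) ]. -/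
/-!
Since `Ψ² + Φ² + Ω² = 1`, the integrand is `(q + (a + K b - Ω)²)^(-3/2)` with
`q = Ψ² + (K_y c - Φ)² > 0`, so the three integrations can be done one after the other by the
fundamental theorem of calculus. In `a` the primitive is `t / (q √(q + t²))`; after the linear
substitution `t = K b ± a₀ - Ω` its primitive in `b` is `√(q + t²) / q`; and, as a function of
`x = K_y c - Φ`, this last expression `√(Ψ² + x² + y²) / (Ψ² + x²)` is the `x`-derivative of
`F(x, y)`.
The lower limits `-b₀`, `-c₀` are turned into the upper ones by the evenness of `√(q + t²) / q`
in `t` and the oddness of `F` in `x`, which produces the eight signed terms.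
-/

open Real

/-- `F(x, y) := arcsinh(x/√(Ψ² + y²)) + (y/Ψ)·arctan(x·y/(Ψ·√(Ψ² + x² + y²)))`. -/
noncomputable def F (Ψ x y : ℝ) : ℝ :=
  Real.arsinh (x / Real.sqrt (Ψ ^ 2 + y ^ 2)) +
    (y / Ψ) * Real.arctan (x * y / (Ψ * Real.sqrt (Ψ ^ 2 + x ^ 2 + y ^ 2)))

open intervalIntegral MeasureTheory

theorem integral_comp_mul_add_eq_sub {f f' : ℝ → ℝ} {K : ℝ} (hK : K ≠ 0)
    (hf : ∀ x, HasDerivAt f (f' x) x) (hf' : Continuous f') (d u v : ℝ) :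
    ∫ x in u..v, f' (K * x + d) = K⁻¹ * (f (K * v + d) - f (K * u + d)) := by
  rw [integral_comp_mul_add _ hK, smul_eq_mul,
    integral_eq_sub_of_hasDerivAt (fun x _ => hf x) (hf'.intervalIntegrable _ _)]

-- `primitive₁ q` and `primitive₂ q` are successive primitives of `t ↦ (q + t²)^(-3/2)`.
noncomputable def primitive₁ (q t : ℝ) : ℝ := t / (q * √(q + t ^ 2))

noncomputable def primitive₂ (q t : ℝ) : ℝ := √(q + t ^ 2) / q

section Primitives

variable {q : ℝ}

theorem hasDerivAt_sqrt_add_sq (hq : 0 < q) (t : ℝ) :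
    HasDerivAt (fun t => √(q + t ^ 2)) (t / √(q + t ^ 2)) t := by
  have hpos : 0 < q + t ^ 2 := by positivity
  convert (((hasDerivAt_pow 2 t).const_add q).sqrt hpos.ne') using 1
  field_simp
  ring

theorem hasDerivAt_primitive₁ (hq : 0 < q) (t : ℝ) :
    HasDerivAt (primitive₁ q) ((q + t ^ 2) ^ (-(3 : ℝ) / 2)) t := by
  have hpos : 0 < q + t ^ 2 := by positivity
  have hsq : √(q + t ^ 2) ^ 2 = q + t ^ 2 := sq_sqrt hpos.le
  have hrpow : (q + t ^ 2) ^ (-(3 : ℝ) / 2) = ((q + t ^ 2) * √(q + t ^ 2))⁻¹ := by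
    rw [show (-(3 : ℝ) / 2) = -(1 + 1 / 2) by norm_num, rpow_neg hpos.le, rpow_add hpos,
      rpow_one, ← sqrt_eq_rpow]
  refine ((hasDerivAt_id t).div ((hasDerivAt_sqrt_add_sq hq t).const_mul q)
    (by positivity)).congr_deriv ?_
  rw [hrpow]
  field_simp
  simp only [id_eq]
  linear_combination t ^ 2 * hsq

theorem hasDerivAt_primitive₂ (hq : 0 < q) (t : ℝ) :
    HasDerivAt (primitive₂ q) (primitive₁ q t) t := by
  refine ((hasDerivAt_sqrt_add_sq hq t).div_const q).congr_deriv ?_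
  rw [primitive₁, div_div, mul_comm]

theorem continuous_primitive₁ (hq : 0 < q) : Continuous (primitive₁ q) :=
  continuous_iff_continuousAt.2 fun t => (hasDerivAt_primitive₁ hq t).continuousAt

theorem primitive₂_neg (q t : ℝ) : primitive₂ q (-t) = primitive₂ q t := by
  rw [primitive₂, primitive₂, neg_sq]

end Primitives

theorem F_neg (Ψ x y : ℝ) : F Ψ (-x) y = -F Ψ x y := by
  simp only [F, neg_sq, neg_div, neg_mul, arsinh_neg, arctan_neg]
  ring

theorem hasDerivAt_F {Ψ : ℝ} (hΨ : Ψ ≠ 0) (x y : ℝ) :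
    HasDerivAt (fun x => F Ψ x y) (primitive₂ (Ψ ^ 2 + x ^ 2) y) x := by
  have hy : 0 < Ψ ^ 2 + y ^ 2 := by positivity
  have hxy : 0 < Ψ ^ 2 + x ^ 2 + y ^ 2 := by positivity
  have hc2 : √(Ψ ^ 2 + y ^ 2) ^ 2 = Ψ ^ 2 + y ^ 2 := sq_sqrt hy.le
  have hr2 : √(Ψ ^ 2 + x ^ 2 + y ^ 2) ^ 2 = Ψ ^ 2 + x ^ 2 + y ^ 2 := sq_sqrt hxy.le
  have harsinh : HasDerivAt (fun x => arsinh (x / √(Ψ ^ 2 + y ^ 2)))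
      (√(Ψ ^ 2 + x ^ 2 + y ^ 2))⁻¹ x := by
    refine ((hasDerivAt_id x).div_const _).arsinh.congr_deriv ?_
    have hsqrt : √(1 + (id x / √(Ψ ^ 2 + y ^ 2)) ^ 2)
        = √(Ψ ^ 2 + x ^ 2 + y ^ 2) / √(Ψ ^ 2 + y ^ 2) := by
      rw [← sqrt_div' _ hy.le]
      congr 1
      field_simp
      simp only [id_eq, hc2]
      ring
    rw [hsqrt, smul_eq_mul]
    field_simp
  have harctan : HasDerivAt
      (fun x => y / Ψ * arctan (x * y / (Ψ * √(Ψ ^ 2 + x ^ 2 + y ^ 2))))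
      (y ^ 2 / ((Ψ ^ 2 + x ^ 2) * √(Ψ ^ 2 + x ^ 2 + y ^ 2))) x := by
    have hsqrt := ((((hasDerivAt_pow 2 x).const_add (Ψ ^ 2)).add_const (y ^ 2)).sqrt hxy.ne')
    refine ((((hasDerivAt_id x).mul_const y).div (hsqrt.const_mul Ψ)
      (by positivity)).arctan.const_mul (y / Ψ)).congr_deriv ?_
    simp only [id_eq, Pi.div_apply, Nat.cast_ofNat]
    field_simp
    linear_combination y ^ 2 * x ^ 2 * hr2
  refine (harsinh.add harctan).congr_deriv ?_
  rw [primitive₂]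
  field_simp
  linear_combination -hr2

theorem continuous_primitive₂_sq_add {Ψ : ℝ} (hΨ : Ψ ≠ 0) (y : ℝ) :
    Continuous fun x => primitive₂ (Ψ ^ 2 + x ^ 2) y :=
  Continuous.div (by fun_prop) (by fun_prop) fun x => by positivity

theorem integral_add_sq_rpow_neg_three_halves {q : ℝ} (hq : 0 < q) (s a₀ : ℝ) :
    ∫ a in -a₀..a₀, (q + (a + s) ^ 2) ^ (-(3 : ℝ) / 2)
      = primitive₁ q (a₀ + s) - primitive₁ q (-a₀ + s) := by
  rw [integral_comp_add_right (fun t => (q + t ^ 2) ^ (-(3 : ℝ) / 2))]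
  refine integral_eq_sub_of_hasDerivAt (fun t _ => hasDerivAt_primitive₁ hq t)
    (Continuous.intervalIntegrable ?_ _ _)
  exact (by fun_prop : Continuous fun t => q + t ^ 2).rpow_const
    fun t => Or.inl (by positivity)

theorem integral_integral_add_sq_rpow_neg_three_halves {q K : ℝ} (hq : 0 < q) (hK : K ≠ 0)
    (Ω a₀ b₀ : ℝ) :
    ∫ b in -b₀..b₀, ∫ a in -a₀..a₀, (q + (a + (K * b - Ω)) ^ 2) ^ (-(3 : ℝ) / 2)
      = K⁻¹ * (primitive₂ q (K * b₀ + a₀ - Ω) - primitive₂ q (K * b₀ - a₀ - Ω)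
          + primitive₂ q (K * b₀ + a₀ + Ω) - primitive₂ q (K * b₀ - a₀ + Ω)) := by
  have hinner : ∀ b, ∫ a in -a₀..a₀, (q + (a + (K * b - Ω)) ^ 2) ^ (-(3 : ℝ) / 2)
      = primitive₁ q (K * b + (a₀ - Ω)) - primitive₁ q (K * b + (-a₀ - Ω)) := fun b => by
    rw [integral_add_sq_rpow_neg_three_halves hq]
    ring_nf
  have hint : ∀ d, IntervalIntegrable (fun b => primitive₁ q (K * b + d)) volume (-b₀) b₀ :=
    fun d => ((continuous_primitive₁ hq).comp (by fun_prop)).intervalIntegrable _ _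
  simp_rw [hinner]
  rw [integral_sub (hint _) (hint _),
    integral_comp_mul_add_eq_sub hK (hasDerivAt_primitive₂ hq) (continuous_primitive₁ hq),
    integral_comp_mul_add_eq_sub hK (hasDerivAt_primitive₂ hq) (continuous_primitive₁ hq),
    show K * -b₀ + (a₀ - Ω) = -(K * b₀ - a₀ + Ω) by ring,
    show K * -b₀ + (-a₀ - Ω) = -(K * b₀ + a₀ + Ω) by ring, primitive₂_neg, primitive₂_neg]
  ring_nf

theorem integral_primitive₂_sq_add {Ψ Ky : ℝ} (hΨ : Ψ ≠ 0) (hKy : Ky ≠ 0) (Φ c₀ y : ℝ) :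
    ∫ c in -c₀..c₀, primitive₂ (Ψ ^ 2 + (Ky * c - Φ) ^ 2) y
      = Ky⁻¹ * (F Ψ (Ky * c₀ - Φ) y + F Ψ (Ky * c₀ + Φ) y) := by
  have h := integral_comp_mul_add_eq_sub hKy (hasDerivAt_F hΨ · y)
    (continuous_primitive₂_sq_add hΨ y) (-Φ) (-c₀) c₀
  simp only [← sub_eq_add_neg] at h
  rw [h, show Ky * -c₀ - Φ = -(Ky * c₀ + Φ) by ring, F_neg, sub_neg_eq_add]

theorem stmt_0_general (θ φ K Ky a₀ b₀ c₀ Ψ Φ Ω : ℝ)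
    (hθ : θ ∈ Set.Ioo 0 Real.pi) (hφ : φ ∈ Set.Ioo (-(Real.pi / 2)) (Real.pi / 2))
    (hΨ : Ψ = Real.sin θ * Real.cos φ) (hΦ : Φ = Real.sin θ * Real.sin φ)
    (hΩ : Ω = Real.cos θ)
    (hK : 0 < K) (hKy : 0 < Ky) :
    (∫ c in (-c₀)..c₀, ∫ b in (-b₀)..b₀, ∫ a in (-a₀)..a₀,
        (1 - 2 * a * Ω - 2 * K * b * Ω - 2 * Ky * c * Φ
          + a ^ 2 + K ^ 2 * b ^ 2 + 2 * K * a * b + Ky ^ 2 * c ^ 2) ^ (-(3 : ℝ) / 2))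
      = (1 / (K * Ky)) *
        (F Ψ (Ky * c₀ - Φ) (K * b₀ + a₀ - Ω) - F Ψ (Ky * c₀ - Φ) (K * b₀ - a₀ - Ω)
          + F Ψ (Ky * c₀ - Φ) (K * b₀ + a₀ + Ω) - F Ψ (Ky * c₀ - Φ) (K * b₀ - a₀ + Ω)
          + F Ψ (Ky * c₀ + Φ) (K * b₀ + a₀ - Ω) - F Ψ (Ky * c₀ + Φ) (K * b₀ - a₀ - Ω)
          + F Ψ (Ky * c₀ + Φ) (K * b₀ + a₀ + Ω) - F Ψ (Ky * c₀ + Φ) (K * b₀ - a₀ + Ω)) := by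
  have hΨ_pos : 0 < Ψ := hΨ ▸ mul_pos (sin_pos_of_pos_of_lt_pi hθ.1 hθ.2) (cos_pos_of_mem_Ioo hφ)
  have hunit : Ψ ^ 2 + Φ ^ 2 + Ω ^ 2 = 1 := by
    rw [hΨ, hΦ, hΩ]
    linear_combination sin θ ^ 2 * sin_sq_add_cos_sq φ + sin_sq_add_cos_sq θ
  have hint : ∀ y, IntervalIntegrable (fun c => primitive₂ (Ψ ^ 2 + (Ky * c - Φ) ^ 2) y)
      volume (-c₀) c₀ := fun y =>
    ((continuous_primitive₂_sq_add hΨ_pos.ne' y).comp (by fun_prop)).intervalIntegrable _ _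
  calc _ = ∫ c in -c₀..c₀, ∫ b in -b₀..b₀, ∫ a in -a₀..a₀,
        (Ψ ^ 2 + (Ky * c - Φ) ^ 2 + (a + (K * b - Ω)) ^ 2) ^ (-(3 : ℝ) / 2) := by
        refine integral_congr fun c _ => integral_congr fun b _ => integral_congr fun a _ => ?_
        congr 1
        linear_combination -hunit
    _ = ∫ c in -c₀..c₀, K⁻¹ * (primitive₂ (Ψ ^ 2 + (Ky * c - Φ) ^ 2) (K * b₀ + a₀ - Ω)
          - primitive₂ (Ψ ^ 2 + (Ky * c - Φ) ^ 2) (K * b₀ - a₀ - Ω)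
          + primitive₂ (Ψ ^ 2 + (Ky * c - Φ) ^ 2) (K * b₀ + a₀ + Ω)
          - primitive₂ (Ψ ^ 2 + (Ky * c - Φ) ^ 2) (K * b₀ - a₀ + Ω)) :=
        integral_congr fun c _ =>
          integral_integral_add_sq_rpow_neg_three_halves (by positivity) hK.ne' Ω a₀ b₀
    _ = _ := by
        rw [intervalIntegral.integral_const_mul,
          integral_sub (((hint _).sub (hint _)).add (hint _)) (hint _), integral_add ((hint _).sub (hint _)) (hint _), integral_sub (hint _) (hint _)]
        simp only [integral_primitive₂_sq_add hΨ_pos.ne' hKy.ne']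
        ring

theorem stmt_0 (θ φ K Ky a₀ b₀ c₀ Ψ Φ Ω : ℝ)
    (hθ : θ ∈ Set.Ioo 0 Real.pi) (hφ : φ ∈ Set.Ioo (-(Real.pi / 2)) (Real.pi / 2))
    (hΨ : Ψ = Real.sin θ * Real.cos φ) (hΦ : Φ = Real.sin θ * Real.sin φ)
    (hΩ : Ω = Real.cos θ)
    (hK : 0 < K) (hKy : 0 < Ky) (ha₀ : 0 < a₀) (hb₀ : 0 < b₀) (hc₀ : 0 < c₀) :
    (∫ c in (-c₀)..c₀, ∫ b in (-b₀)..b₀, ∫ a in (-a₀)..a₀,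
        (1 - 2 * a * Ω - 2 * K * b * Ω - 2 * Ky * c * Φ
          + a ^ 2 + K ^ 2 * b ^ 2 + 2 * K * a * b + Ky ^ 2 * c ^ 2) ^ (-(3 : ℝ) / 2))
      = (1 / (K * Ky)) *
        (F Ψ (Ky * c₀ - Φ) (K * b₀ + a₀ - Ω) - F Ψ (Ky * c₀ - Φ) (K * b₀ - a₀ - Ω)
          + F Ψ (Ky * c₀ - Φ) (K * b₀ + a₀ + Ω) - F Ψ (Ky * c₀ - Φ) (K * b₀ - a₀ + Ω)
          + F Ψ (Ky * c₀ + Φ) (K * b₀ + a₀ - Ω) - F Ψ (Ky * c₀ + Φ) (K * b₀ - a₀ - Ω)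
          + F Ψ (Ky * c₀ + Φ) (K * b₀ + a₀ + Ω) - F Ψ (Ky * c₀ + Φ) (K * b₀ - a₀ + Ω)) :=
  stmt_0_general θ φ K Ky a₀ b₀ c₀ Ψ Φ Ω hθ hφ hΨ hΦ hΩ hK hKy
end

section
/- Let Ψ > 0 and let Φ, Ω, y₀, z₀ be real numbers with y₀, z₀ > 0. Then ∫_{−y₀}^{y₀} ∫_{−z₀}^{z₀} [Ψ² + (u − Φ)² + (v − Ω)²]^{−3/2} dv du = (1/Ψ)·[ G(y₀ − Φ, z₀ − Ω) + G(y₀ − Φ, z₀ + Ω) + G(y₀ + Φ, z₀ − Ω) + G(y₀ + Φ, z₀ + Ω) ]. -/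
/-!
Both integrations are explicit. For `A > 0` the map `w ↦ w / (A √(A + w²))` is an odd
antiderivative of `(A + w²)^(-3/2)`, so the inner integral over `v` is a sum of two such terms
with `A = Ψ² + (u - Φ)²`. Each of them is, up to the factor `1 / Ψ`, the `x`-derivative of
`G Ψ x c` at `x = u - Φ`, and `G` is odd in `x`, so the outer integral gives the four values
of `G`.
-/

open Real

/-- `G(x, y) := arctan(x·y/(Ψ·√(Ψ² + x² + y²)))`. -/
noncomputable def G (Ψ x y : ℝ) : ℝ :=
  Real.arctan (x * y / (Ψ * Real.sqrt (Ψ ^ 2 + x ^ 2 + y ^ 2)))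

theorem intervalIntegral.integral_comp_sub_eq_of_odd {f F : ℝ → ℝ}
    (hF : ∀ x, HasDerivAt F (f x) x) (hF_odd : Function.Odd F) (hf : Continuous f) (a s : ℝ) :
    ∫ t in (-a)..a, f (t - s) = F (a - s) + F (a + s) := by
  rw [intervalIntegral.integral_comp_sub_right,
    intervalIntegral.integral_eq_sub_of_hasDerivAt (fun x _ => hF x) (hf.intervalIntegrable _ _),
    show -a - s = -(a + s) by ring, hF_odd]
  ring

theorem Real.rpow_neg_three_halves {x : ℝ} (hx : 0 ≤ x) : x ^ (-(3 : ℝ) / 2) = (x * √x)⁻¹ := by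
  rw [show -(3 : ℝ) / 2 = -(1 + 1 / 2) by norm_num, rpow_neg hx,
    rpow_add' hx (by norm_num), rpow_one, ← sqrt_eq_rpow]

theorem hasDerivAt_div_mul_sqrt_add_sq {A : ℝ} (hA : 0 < A) (w : ℝ) :
    HasDerivAt (fun w => w / (A * √(A + w ^ 2))) ((A + w ^ 2) ^ (-(3 : ℝ) / 2)) w := by
  have hpos : 0 < A + w ^ 2 := by positivity
  have hsqrt : HasDerivAt (fun w => √(A + w ^ 2)) (2 * w / (2 * √(A + w ^ 2))) w := by
    simpa using (((hasDerivAt_id w).pow 2).const_add A).sqrt hpos.ne'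
  refine ((hasDerivAt_id' w).fun_div (hsqrt.const_mul A) (by positivity)).congr_deriv ?_
  have hsq : √(A + w ^ 2) ^ 2 = A + w ^ 2 := sq_sqrt hpos.le
  have : √(A + w ^ 2) ≠ 0 := by positivity
  rw [rpow_neg_three_halves hpos.le]
  field_simp
  linear_combination w ^ 2 * hsq

theorem integral_add_sub_sq_rpow_neg_three_halves {A : ℝ} (hA : 0 < A) (Ω z₀ : ℝ) :
    ∫ v in (-z₀)..z₀, (A + (v - Ω) ^ 2) ^ (-(3 : ℝ) / 2)
      = (z₀ - Ω) / (A * √(A + (z₀ - Ω) ^ 2)) + (z₀ + Ω) / (A * √(A + (z₀ + Ω) ^ 2)) := by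
  refine intervalIntegral.integral_comp_sub_eq_of_odd (hasDerivAt_div_mul_sqrt_add_sq hA)
    (fun w => by simp only [neg_sq, neg_div]) ?_ z₀ Ω
  exact (continuous_const.add (continuous_pow 2)).rpow_const
    fun w => Or.inl (add_pos_of_pos_of_nonneg hA (sq_nonneg w)).ne'

theorem G_neg_left (Ψ x y : ℝ) : G Ψ (-x) y = -G Ψ x y := by
  simp only [G, neg_sq, neg_mul, neg_div, arctan_neg]

theorem hasDerivAt_G {Ψ : ℝ} (hΨ : Ψ ≠ 0) (x y : ℝ) :
    HasDerivAt (fun x => G Ψ x y) (Ψ * y / ((Ψ ^ 2 + x ^ 2) * √(Ψ ^ 2 + x ^ 2 + y ^ 2))) x := by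
  have hpos : 0 < Ψ ^ 2 + x ^ 2 + y ^ 2 := by positivity
  have hsqrt : HasDerivAt (fun x => √(Ψ ^ 2 + x ^ 2 + y ^ 2))
      (2 * x / (2 * √(Ψ ^ 2 + x ^ 2 + y ^ 2))) x := by
    simpa using ((((hasDerivAt_id x).pow 2).const_add (Ψ ^ 2)).add_const (y ^ 2)).sqrt hpos.ne'
  have hquot := ((hasDerivAt_id' x).mul_const y).fun_div (hsqrt.const_mul Ψ) (by positivity)
  refine hquot.arctan.congr_deriv ?_
  have hsq : √(Ψ ^ 2 + x ^ 2 + y ^ 2) ^ 2 = Ψ ^ 2 + x ^ 2 + y ^ 2 := sq_sqrt hpos.le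
  have : √(Ψ ^ 2 + x ^ 2 + y ^ 2) ≠ 0 := by positivity
  have : Ψ ^ 2 + x ^ 2 ≠ 0 := by positivity
  field_simp
  linear_combination y * x ^ 2 * hsq

theorem continuous_div_mul_sqrt {Ψ : ℝ} (hΨ : Ψ ≠ 0) (y : ℝ) :
    Continuous fun x => y / ((Ψ ^ 2 + x ^ 2) * √(Ψ ^ 2 + x ^ 2 + y ^ 2)) :=
  continuous_const.div (by fun_prop) fun x => by positivity

theorem integral_deriv_G {Ψ : ℝ} (hΨ : Ψ ≠ 0) (Φ y₀ y : ℝ) :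
    ∫ u in (-y₀)..y₀, y / ((Ψ ^ 2 + (u - Φ) ^ 2) * √(Ψ ^ 2 + (u - Φ) ^ 2 + y ^ 2))
      = (G Ψ (y₀ - Φ) y + G Ψ (y₀ + Φ) y) / Ψ := by
  rw [add_div]
  refine intervalIntegral.integral_comp_sub_eq_of_odd (F := fun x => G Ψ x y / Ψ)
    (fun x => ?_) (fun x => by simp only [G_neg_left, neg_div])
    (continuous_div_mul_sqrt hΨ y) y₀ Φ
  refine ((hasDerivAt_G hΨ x y).div_const Ψ).congr_deriv ?_
  field_simp

theorem stmt_1_general (Ψ Φ Ω y₀ z₀ : ℝ) (hΨ : 0 < Ψ) :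
    (∫ u in (-y₀)..y₀, ∫ v in (-z₀)..z₀,
        (Ψ ^ 2 + (u - Φ) ^ 2 + (v - Ω) ^ 2) ^ (-(3 : ℝ) / 2))
      = (1 / Ψ) *
        (G Ψ (y₀ - Φ) (z₀ - Ω) + G Ψ (y₀ - Φ) (z₀ + Ω)
          + G Ψ (y₀ + Φ) (z₀ - Ω) + G Ψ (y₀ + Φ) (z₀ + Ω)) := by
  have integrable (y : ℝ) : IntervalIntegrable
      (fun u => y / ((Ψ ^ 2 + (u - Φ) ^ 2) * √(Ψ ^ 2 + (u - Φ) ^ 2 + y ^ 2)))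
      MeasureTheory.volume (-y₀) y₀ :=
    ((continuous_div_mul_sqrt hΨ.ne' y).comp (continuous_sub_right Φ)).intervalIntegrable _ _
  calc _ = ∫ u in (-y₀)..y₀,
          ((z₀ - Ω) / ((Ψ ^ 2 + (u - Φ) ^ 2) * √(Ψ ^ 2 + (u - Φ) ^ 2 + (z₀ - Ω) ^ 2))
            + (z₀ + Ω) / ((Ψ ^ 2 + (u - Φ) ^ 2) * √(Ψ ^ 2 + (u - Φ) ^ 2 + (z₀ + Ω) ^ 2))) :=
        intervalIntegral.integral_congr fun u _ =>
          integral_add_sub_sq_rpow_neg_three_halves (by positivity) Ω z₀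
    _ = _ := by
      rw [intervalIntegral.integral_add (integrable _) (integrable _),
        integral_deriv_G hΨ.ne', integral_deriv_G hΨ.ne']
      ring

theorem stmt_1 (Ψ Φ Ω y₀ z₀ : ℝ) (hΨ : 0 < Ψ) (hy₀ : 0 < y₀) (hz₀ : 0 < z₀) :
    (∫ u in (-y₀)..y₀, ∫ v in (-z₀)..z₀,
        (Ψ ^ 2 + (u - Φ) ^ 2 + (v - Ω) ^ 2) ^ (-(3 : ℝ) / 2))
      = (1 / Ψ) *
        (G Ψ (y₀ - Φ) (z₀ - Ω) + G Ψ (y₀ - Φ) (z₀ + Ω)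
          + G Ψ (y₀ + Φ) (z₀ - Ω) + G Ψ (y₀ + Φ) (z₀ + Ω)) :=
  stmt_1_general Ψ Φ Ω y₀ z₀ hΨ
end

section
/- Let Ψ > 0 and fix x ∈ ℝ. For every y ∈ ℝ, the function y ↦ arcsinh(x/√(Ψ² + y²)) + (y/Ψ)·arctan(x·y/(Ψ·√(Ψ² + x² + y²))) is differentiable at y with derivative (1/Ψ)·arctan(x·y/(Ψ·√(Ψ² + x² + y²))). -/
/-! Differentiating `arsinh (x / √(Ψ² + y²))` gives `-x y / ((Ψ² + y²) √(Ψ² + x² + y²))`, and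
`(y / Ψ)` times the derivative of the arctan term gives the opposite; so only the term
`(1 / Ψ) · arctan (…)` of the product rule survives. -/

open Real

theorem hasDerivAt_arsinh_div_sqrt {a : ℝ} (ha : 0 < a) (x y : ℝ) :
    HasDerivAt (fun y : ℝ => arsinh (x / √(a + y ^ 2)))
      (-(x * y) / ((a + y ^ 2) * √(a + x ^ 2 + y ^ 2))) y := by
  have hS : 0 < a + y ^ 2 := by positivity
  have hT : 0 < a + x ^ 2 + y ^ 2 := by positivity
  have hsqrt : √(1 + (x / √(a + y ^ 2)) ^ 2) = √(a + x ^ 2 + y ^ 2) / √(a + y ^ 2) := by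
    rw [div_pow, sq_sqrt hS.le, ← sqrt_div' _ hS.le, one_add_div hS.ne']
    congr 2
    ring
  have hquot := (hasDerivAt_const y x).fun_div
    (((hasDerivAt_pow 2 y).const_add a).sqrt hS.ne') (sqrt_pos.mpr hS).ne'
  refine ((hasDerivAt_arsinh _).comp y hquot).congr_deriv ?_
  have hT0 := sqrt_pos.mpr hT
  rw [hsqrt]
  field_simp
  rw [sq_sqrt hS.le]
  ring

theorem hasDerivAt_arctan_mul_div_sqrt {Ψ : ℝ} (hΨ : Ψ ≠ 0) (x y : ℝ) :
    HasDerivAt (fun y : ℝ => arctan (x * y / (Ψ * √(Ψ ^ 2 + x ^ 2 + y ^ 2))))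
      (Ψ * x / ((Ψ ^ 2 + y ^ 2) * √(Ψ ^ 2 + x ^ 2 + y ^ 2))) y := by
  have hT : 0 < Ψ ^ 2 + x ^ 2 + y ^ 2 := by positivity
  have hT0 := sqrt_pos.mpr hT
  have hquot := ((hasDerivAt_id' y).const_mul x).fun_div
    ((((hasDerivAt_pow 2 y).const_add (Ψ ^ 2 + x ^ 2)).sqrt hT.ne').const_mul Ψ)
    (mul_ne_zero hΨ hT0.ne')
  refine ((hasDerivAt_arctan _).comp y hquot).congr_deriv ?_
  field_simp
  rw [sq_sqrt hT.le]
  ring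

theorem stmt_3 (Ψ x : ℝ) (hΨ : 0 < Ψ) (y : ℝ) :
    HasDerivAt
      (fun y : ℝ =>
        Real.arsinh (x / Real.sqrt (Ψ ^ 2 + y ^ 2)) +
          (y / Ψ) * Real.arctan (x * y / (Ψ * Real.sqrt (Ψ ^ 2 + x ^ 2 + y ^ 2))))
      ((1 / Ψ) * Real.arctan (x * y / (Ψ * Real.sqrt (Ψ ^ 2 + x ^ 2 + y ^ 2)))) y := by
  refine ((hasDerivAt_arsinh_div_sqrt (by positivity) x y).add
    (((hasDerivAt_id' y).div_const Ψ).mul (hasDerivAt_arctan_mul_div_sqrt hΨ.ne' x y))).congr_deriv ?_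
  field_simp
  ring
end

section
/- Let Ψ > 0 and fix y ∈ ℝ. For every x ∈ ℝ, the function x ↦ arctan(x·y/(Ψ·√(Ψ² + x² + y²))) is differentiable at x with derivative Ψ·y/((Ψ² + x²)·√(Ψ² + x² + y²)). -/
open Real

theorem hasDerivAt_div_sqrt_sq_add {c : ℝ} (hc : 0 < c) (x : ℝ) :
    HasDerivAt (fun x => x / √(x ^ 2 + c)) (c / ((x ^ 2 + c) * √(x ^ 2 + c))) x := by
  have hpos : 0 < x ^ 2 + c := by positivity
  have hsqrt_pos : 0 < √(x ^ 2 + c) := sqrt_pos.mpr hpos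
  have hsqrt : HasDerivAt (fun x => √(x ^ 2 + c)) (x / √(x ^ 2 + c)) x :=
    (((hasDerivAt_pow 2 x).add_const c).sqrt hpos.ne').congr_deriv (by field_simp; ring)
  refine ((hasDerivAt_id x).div hsqrt hsqrt_pos.ne').congr_deriv ?_
  rw [id]
  field_simp
  rw [sq_sqrt hpos.le]
  ring

theorem stmt_4 (Ψ y : ℝ) (hΨ : 0 < Ψ) (x : ℝ) :
    HasDerivAt
      (fun x : ℝ => Real.arctan (x * y / (Ψ * Real.sqrt (Ψ ^ 2 + x ^ 2 + y ^ 2))))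
      (Ψ * y / ((Ψ ^ 2 + x ^ 2) * Real.sqrt (Ψ ^ 2 + x ^ 2 + y ^ 2))) x := by
  have hc : 0 < Ψ ^ 2 + y ^ 2 := by positivity
  have hreorder (x : ℝ) : Ψ ^ 2 + x ^ 2 + y ^ 2 = x ^ 2 + (Ψ ^ 2 + y ^ 2) := by ring
  convert ((hasDerivAt_div_sqrt_sq_add hc x).const_mul (y / Ψ)).arctan using 1
  · funext t
    rw [hreorder]
    field_simp
  · rw [hreorder]
    have hsqrt_sq : √(x ^ 2 + (Ψ ^ 2 + y ^ 2)) ^ 2 = x ^ 2 + (Ψ ^ 2 + y ^ 2) :=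
      sq_sqrt (by positivity)
    -- The arctan factor 1 + u² simplifies by Ψ²(Ψ² + x² + y²) + x²y² = (Ψ² + x²)(Ψ² + y²).
    field_simp
    rw [hsqrt_sq]
    ring
end

section
/- Let Ψ > 0, κ > 0, and let B₁, B₃, B₄ be real numbers. Then, as t → +∞, the difference F(B₁, κ·t + B₃) − F(B₁, κ·t − B₄) converges to ((B₃ + B₄)/Ψ)·arctan(B₁/Ψ). -/
open Real Filter

private lemma arctan_lipschitz : LipschitzWith 1 Real.arctan := by
  apply lipschitzWith_of_nnnorm_deriv_le Real.differentiable_arctan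
  intro x
  rw [Real.deriv_arctan, ← NNReal.coe_le_coe, coe_nnnorm, Real.norm_eq_abs, NNReal.coe_one,
    abs_of_pos (by positivity), div_le_one (by positivity)]
  nlinarith [sq_nonneg x]

private lemma arctan_sub_le (a b : ℝ) : |Real.arctan a - Real.arctan b| ≤ |a - b| := by
  have := arctan_lipschitz.dist_le_mul a b
  simpa [Real.dist_eq] using this

private lemma key (Ψ B₁ : ℝ) (hΨ : 0 < Ψ) :
    Tendsto (fun y : ℝ =>
        y * (Real.arctan (B₁ * y / (Ψ * Real.sqrt (Ψ ^ 2 + B₁ ^ 2 + y ^ 2)))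
          - Real.arctan (B₁ / Ψ))) atTop (nhds 0) := by
  have hSpos : 0 < Ψ ^ 2 + B₁ ^ 2 := by positivity
  apply squeeze_zero_norm' (a := fun y => |B₁| * (Ψ ^ 2 + B₁ ^ 2) / (Ψ * y))
  · filter_upwards [eventually_ge_atTop 1] with y hy
    have hy0 : (0:ℝ) < y := by linarith
    set s := Real.sqrt (Ψ ^ 2 + B₁ ^ 2 + y ^ 2) with hs
    have hs2 : s ^ 2 = Ψ ^ 2 + B₁ ^ 2 + y ^ 2 := Real.sq_sqrt (by positivity)
    have hsnn : 0 ≤ s := Real.sqrt_nonneg _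
    have hsy : y ≤ s := by nlinarith
    have hs0 : 0 < s := lt_of_lt_of_le hy0 hsy
    have h1 : |Real.arctan (B₁ * y / (Ψ * s)) - Real.arctan (B₁ / Ψ)|
        ≤ |B₁| * (s - y) / (Ψ * s) := by
      refine (arctan_sub_le _ _).trans_eq ?_
      have : B₁ * y / (Ψ * s) - B₁ / Ψ = B₁ * (y - s) / (Ψ * s) := by
        field_simp
      rw [this, abs_div, abs_mul, abs_of_pos (show (0:ℝ) < Ψ * s by positivity),
        abs_sub_comm, abs_of_nonneg (sub_nonneg.2 hsy)]
    calc ‖y * (Real.arctan (B₁ * y / (Ψ * s)) - Real.arctan (B₁ / Ψ))‖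
        = y * |Real.arctan (B₁ * y / (Ψ * s)) - Real.arctan (B₁ / Ψ)| := by
          rw [Real.norm_eq_abs, abs_mul, abs_of_pos hy0]
      _ ≤ y * (|B₁| * (s - y) / (Ψ * s)) := by
          exact mul_le_mul_of_nonneg_left h1 hy0.le
      _ ≤ |B₁| * (Ψ ^ 2 + B₁ ^ 2) / (Ψ * y) := by
          rw [mul_div_assoc' y, div_le_div_iff₀ (by positivity) (by positivity)]
          have hB : 0 ≤ |B₁| := abs_nonneg _
          have hfac : 0 ≤ |B₁| * Ψ * ((s - y) * (s ^ 2 + s * y - y ^ 2)) :=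
            mul_nonneg (mul_nonneg hB hΨ.le) (mul_nonneg (sub_nonneg.2 hsy)
              (by nlinarith))
          have hkey : |B₁| * (Ψ ^ 2 + B₁ ^ 2) * (Ψ * s)
              = |B₁| * Ψ * ((s - y) * (s ^ 2 + s * y - y ^ 2))
                + y * (|B₁| * (s - y)) * (Ψ * y) := by
            linear_combination (-(|B₁| * Ψ * s)) * hs2
          linarith [hkey, hfac]
  · have h := Tendsto.div_atTop (l := atTop) (a := |B₁| * (Ψ ^ 2 + B₁ ^ 2))
      tendsto_const_nhds (tendsto_id.const_mul_atTop hΨ)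
    simpa using h

theorem stmt_9 (Ψ κ B₁ B₃ B₄ : ℝ) (hΨ : 0 < Ψ) (hκ : 0 < κ) :
    Filter.Tendsto (fun t : ℝ => F Ψ B₁ (κ * t + B₃) - F Ψ B₁ (κ * t - B₄))
      Filter.atTop (nhds (((B₃ + B₄) / Ψ) * Real.arctan (B₁ / Ψ))) := by
  have hp : Tendsto (fun t : ℝ => κ * t + B₃) atTop atTop :=
    tendsto_atTop_add_const_right _ B₃ (tendsto_id.const_mul_atTop hκ)
  have hq : Tendsto (fun t : ℝ => κ * t - B₄) atTop atTop := by
    simpa [sub_eq_add_neg] using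
      tendsto_atTop_add_const_right atTop (-B₄) (tendsto_id.const_mul_atTop hκ)
  -- arsinh part tends to 0
  have hu : Tendsto (fun y : ℝ => Real.arsinh (B₁ / Real.sqrt (Ψ ^ 2 + y ^ 2)))
      atTop (nhds 0) := by
    rw [← Real.arsinh_zero]
    apply (Real.continuous_arsinh.tendsto 0).comp
    apply squeeze_zero_norm' (a := fun y => |B₁| / y)
    · filter_upwards [eventually_ge_atTop 1] with y hy
      have hy0 : (0:ℝ) < y := by linarith
      have hsy : y ≤ Real.sqrt (Ψ ^ 2 + y ^ 2) := by
        have := Real.sq_sqrt (show (0:ℝ) ≤ Ψ ^ 2 + y ^ 2 by positivity)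
        nlinarith [Real.sqrt_nonneg (Ψ ^ 2 + y ^ 2)]
      have hs0 : 0 < Real.sqrt (Ψ ^ 2 + y ^ 2) := lt_of_lt_of_le hy0 hsy
      rw [Real.norm_eq_abs, abs_div, abs_of_pos hs0]
      gcongr
    · exact Tendsto.div_atTop tendsto_const_nhds tendsto_id
  have hk := key Ψ B₁ hΨ
  have h0 : Tendsto (fun t : ℝ =>
      (Real.arsinh (B₁ / Real.sqrt (Ψ ^ 2 + (κ * t + B₃) ^ 2))
        - Real.arsinh (B₁ / Real.sqrt (Ψ ^ 2 + (κ * t - B₄) ^ 2)))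
      + ((1 / Ψ) * ((κ * t + B₃) *
            (Real.arctan (B₁ * (κ * t + B₃) /
                (Ψ * Real.sqrt (Ψ ^ 2 + B₁ ^ 2 + (κ * t + B₃) ^ 2)))
              - Real.arctan (B₁ / Ψ)))
        - (1 / Ψ) * ((κ * t - B₄) *
            (Real.arctan (B₁ * (κ * t - B₄) /
                (Ψ * Real.sqrt (Ψ ^ 2 + B₁ ^ 2 + (κ * t - B₄) ^ 2)))
              - Real.arctan (B₁ / Ψ))))) atTop (nhds 0) := by
    have := ((hu.comp hp).sub (hu.comp hq)).add
      (((hk.comp hp).const_mul (1 / Ψ)).sub ((hk.comp hq).const_mul (1 / Ψ)))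
    simpa [Function.comp] using this
  have heq : (fun t : ℝ => F Ψ B₁ (κ * t + B₃) - F Ψ B₁ (κ * t - B₄))
      = fun t : ℝ => ((B₃ + B₄) / Ψ) * Real.arctan (B₁ / Ψ) +
      ((Real.arsinh (B₁ / Real.sqrt (Ψ ^ 2 + (κ * t + B₃) ^ 2))
        - Real.arsinh (B₁ / Real.sqrt (Ψ ^ 2 + (κ * t - B₄) ^ 2)))
      + ((1 / Ψ) * ((κ * t + B₃) *
            (Real.arctan (B₁ * (κ * t + B₃) /
                (Ψ * Real.sqrt (Ψ ^ 2 + B₁ ^ 2 + (κ * t + B₃) ^ 2)))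
              - Real.arctan (B₁ / Ψ)))
        - (1 / Ψ) * ((κ * t - B₄) *
            (Real.arctan (B₁ * (κ * t - B₄) /
                (Ψ * Real.sqrt (Ψ ^ 2 + B₁ ^ 2 + (κ * t - B₄) ^ 2)))
              - Real.arctan (B₁ / Ψ))))) := by
    funext t
    simp only [F]
    ring
  rw [heq]
  simpa using tendsto_const_nhds.add h0
end

section
/- Let Ψ > 0, κ > 0, and let X₋, X₊, a₀, Ω be real numbers with a₀ > 0. Then, as t → +∞, the eight-term bracket [ F(X₋, κt + a₀ − Ω) − F(X₋, κt − a₀ − Ω) + F(X₋, κt + a₀ + Ω) − F(X₋, κt − a₀ + Ω) + F(X₊, κt + a₀ − Ω) − F(X₊, κt − a₀ − Ω) + F(X₊, κt + a₀ + Ω) − F(X₊, κt − a₀ + Ω) ] converges to (4a₀/Ψ)·[ arctan(X₋/Ψ) + arctan(X₊/Ψ) ]. -/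
open Real Filter

/-!
As `y → ∞` the `arsinh` term of `F Ψ x y` vanishes, and since `arctan` is 1-Lipschitz and
`y · (y / √(c + y²) - 1) → 0`, the `arctan` term is `(y / Ψ) · arctan (x / Ψ) + o(1)`.
Hence `F Ψ x y = (y / Ψ) · arctan (x / Ψ) + o(1)`, and each difference
`F Ψ x (y + a₀) - F Ψ x (y - a₀)` of the bracket tends to `(2 a₀ / Ψ) · arctan (x / Ψ)`.
-/

open Topology

theorem Real.lipschitzWith_arctan : LipschitzWith 1 arctan :=
  lipschitzWith_of_nnnorm_deriv_le differentiable_arctan fun x => by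
    rw [deriv_arctan, ← NNReal.coe_le_coe, coe_nnnorm, Real.norm_of_nonneg (by positivity)]
    exact div_le_one_of_le₀ (by nlinarith [sq_nonneg x]) (by positivity)

theorem Real.abs_arctan_sub_arctan_le (u v : ℝ) : |arctan u - arctan v| ≤ |u - v| := by
  simpa [Real.dist_eq] using lipschitzWith_arctan.dist_le_mul u v

theorem tendsto_sqrt_add_sq_sub_atTop {c : ℝ} (hc : 0 ≤ c) :
    Tendsto (fun y : ℝ => √(c + y ^ 2) - y) atTop (𝓝 0) := by
  refine squeeze_zero' ?_ ?_ (tendsto_const_nhds.div_atTop tendsto_id : Tendsto (c / ·) _ _)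
  · filter_upwards [eventually_ge_atTop 0] with y hy
    rw [sub_nonneg]
    exact Real.le_sqrt_of_sq_le (by linarith)
  · filter_upwards [eventually_gt_atTop 0] with y hy
    have hcy : y * (c / y) = c := mul_div_cancel₀ c hy.ne'
    rw [sub_le_iff_le_add', Real.sqrt_le_left (by positivity)]
    nlinarith [sq_nonneg (c / y)]

theorem tendsto_mul_div_sqrt_add_sq_sub_one {c : ℝ} (hc : 0 ≤ c) :
    Tendsto (fun y : ℝ => y * (y / √(c + y ^ 2) - 1)) atTop (𝓝 0) := by
  refine squeeze_zero_norm' ?_ (tendsto_sqrt_add_sq_sub_atTop hc)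
  filter_upwards [eventually_gt_atTop 0] with y hy
  have hs : 0 < √(c + y ^ 2) := Real.sqrt_pos.2 (by positivity)
  have hys : y ≤ √(c + y ^ 2) := Real.le_sqrt_of_sq_le (by linarith)
  have hrw : y * (y / √(c + y ^ 2) - 1) = -(y / √(c + y ^ 2) * (√(c + y ^ 2) - y)) := by
    field_simp
    ring
  rw [hrw, norm_neg, norm_mul, Real.norm_of_nonneg (by positivity),
    Real.norm_of_nonneg (by linarith)]
  exact mul_le_of_le_one_left (by linarith) ((div_le_one hs).2 hys)

theorem tendsto_mul_arctan_sub_arctan {Ψ : ℝ} (hΨ : 0 < Ψ) (x : ℝ) :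
    Tendsto (fun y : ℝ =>
      y * (arctan (x * y / (Ψ * √(Ψ ^ 2 + x ^ 2 + y ^ 2))) - arctan (x / Ψ))) atTop (𝓝 0) := by
  have h := ((tendsto_mul_div_sqrt_add_sq_sub_one (c := Ψ ^ 2 + x ^ 2) (by positivity)).const_mul
    (x / Ψ)).norm
  rw [mul_zero, norm_zero] at h
  refine squeeze_zero_norm' ?_ h
  filter_upwards [eventually_ge_atTop 0] with y hy
  have hs : 0 < √(Ψ ^ 2 + x ^ 2 + y ^ 2) := Real.sqrt_pos.2 (by positivity)
  calc ‖y * (arctan (x * y / (Ψ * √(Ψ ^ 2 + x ^ 2 + y ^ 2))) - arctan (x / Ψ))‖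
      ≤ y * |x * y / (Ψ * √(Ψ ^ 2 + x ^ 2 + y ^ 2)) - x / Ψ| := by
        rw [norm_mul, Real.norm_of_nonneg hy, Real.norm_eq_abs]
        exact mul_le_mul_of_nonneg_left (abs_arctan_sub_arctan_le _ _) hy
    _ = ‖x / Ψ * (y * (y / √(Ψ ^ 2 + x ^ 2 + y ^ 2) - 1))‖ := by
        have hrw : x / Ψ * (y * (y / √(Ψ ^ 2 + x ^ 2 + y ^ 2) - 1)) =
            y * (x * y / (Ψ * √(Ψ ^ 2 + x ^ 2 + y ^ 2)) - x / Ψ) := by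
          field_simp
        rw [hrw, Real.norm_eq_abs, abs_mul, abs_of_nonneg hy]

theorem tendsto_arsinh_div_sqrt_add_sq (Ψ x : ℝ) :
    Tendsto (fun y : ℝ => arsinh (x / √(Ψ ^ 2 + y ^ 2))) atTop (𝓝 0) := by
  have hsqrt : Tendsto (fun y : ℝ => √(Ψ ^ 2 + y ^ 2)) atTop atTop :=
    tendsto_sqrt_atTop.comp (tendsto_atTop_add_const_left _ _ (tendsto_pow_atTop two_ne_zero))
  simpa [Function.comp_def] using
    (continuous_arsinh.tendsto 0).comp (tendsto_const_nhds.div_atTop hsqrt)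

theorem tendsto_F_sub_linear {Ψ : ℝ} (hΨ : 0 < Ψ) (x : ℝ) :
    Tendsto (fun y : ℝ => F Ψ x y - y / Ψ * arctan (x / Ψ)) atTop (𝓝 0) := by
  have h := (tendsto_arsinh_div_sqrt_add_sq Ψ x).add
    ((tendsto_mul_arctan_sub_arctan hΨ x).const_mul Ψ⁻¹)
  rw [mul_zero, add_zero] at h
  refine h.congr fun y => ?_
  simp only [F]
  ring

theorem stmt_10_general (Ψ κ Xm Xp a₀ Ω : ℝ) (hΨ : 0 < Ψ) (hκ : 0 < κ) :
    Filter.Tendsto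
      (fun t : ℝ =>
        F Ψ Xm (κ * t + a₀ - Ω) - F Ψ Xm (κ * t - a₀ - Ω)
          + F Ψ Xm (κ * t + a₀ + Ω) - F Ψ Xm (κ * t - a₀ + Ω)
          + F Ψ Xp (κ * t + a₀ - Ω) - F Ψ Xp (κ * t - a₀ - Ω)
          + F Ψ Xp (κ * t + a₀ + Ω) - F Ψ Xp (κ * t - a₀ + Ω))
      Filter.atTop
      (nhds ((4 * a₀ / Ψ) * (Real.arctan (Xm / Ψ) + Real.arctan (Xp / Ψ)))) := by
  have hF (x c : ℝ) := (tendsto_F_sub_linear hΨ x).comp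
    (tendsto_atTop_add_const_right _ c (tendsto_id.const_mul_atTop hκ))
  have total := (((((((hF Xm (a₀ - Ω)).sub (hF Xm (-a₀ - Ω))).add (hF Xm (a₀ + Ω))).sub
    (hF Xm (-a₀ + Ω))).add (hF Xp (a₀ - Ω))).sub (hF Xp (-a₀ - Ω))).add (hF Xp (a₀ + Ω))).sub
    (hF Xp (-a₀ + Ω))
  have hlim := total.add_const (4 * a₀ / Ψ * (arctan (Xm / Ψ) + arctan (Xp / Ψ)))
  simp only [sub_zero, add_zero, zero_add] at hlim
  refine hlim.congr fun t => ?_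
  simp only [Function.comp_apply, id]
  ring_nf

theorem stmt_10 (Ψ κ Xm Xp a₀ Ω : ℝ) (hΨ : 0 < Ψ) (hκ : 0 < κ) (ha₀ : 0 < a₀) :
    Filter.Tendsto
      (fun t : ℝ =>
        F Ψ Xm (κ * t + a₀ - Ω) - F Ψ Xm (κ * t - a₀ - Ω)
          + F Ψ Xm (κ * t + a₀ + Ω) - F Ψ Xm (κ * t - a₀ + Ω)
          + F Ψ Xp (κ * t + a₀ - Ω) - F Ψ Xp (κ * t - a₀ - Ω)
          + F Ψ Xp (κ * t + a₀ + Ω) - F Ψ Xp (κ * t - a₀ + Ω))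
      Filter.atTop
      (nhds ((4 * a₀ / Ψ) * (Real.arctan (Xm / Ψ) + Real.arctan (Xp / Ψ)))) :=
  stmt_10_general Ψ κ Xm Xp a₀ Ω hΨ hκ
end

section
/- Let Ψ > 0 and let B₅, B₆ be real numbers. Then, as h → +∞, the difference F(h, B₅) − F(h, B₆) converges to (1/2)·ln((Ψ² + B₆²)/(Ψ² + B₅²)) + (B₅/Ψ)·arctan(B₅/Ψ) − (B₆/Ψ)·arctan(B₆/Ψ). -/
/-!
Each `F Ψ h y` grows like `log h`: since `arsinh t = log (t + √(1 + t²))`, we get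
`arsinh (h / a) - log h → log 2 - log a`, and the arctan argument is
`(y / Ψ) · h / √(h² + Ψ² + y²) → y / Ψ`. In the difference the divergent `log h` and the
constants `log 2` cancel, and `log √(Ψ² + y²) = log (Ψ² + y²) / 2` gives the logarithm.
-/

open Real Filter Topology

lemma tendsto_div_sqrt_sq_add_atTop (c : ℝ) :
    Tendsto (fun x : ℝ => x / √(x ^ 2 + c)) atTop (𝓝 1) := by
  have hsqrt : Tendsto (fun x : ℝ => (√(1 + c / x ^ 2))⁻¹) atTop (𝓝 1) := by
    simpa using
      ((tendsto_const_nhds.div_atTop (tendsto_pow_atTop two_ne_zero)).const_add 1).sqrt.inv₀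
        (by simp)
  refine hsqrt.congr' ?_
  filter_upwards [eventually_gt_atTop 0] with x hx
  rw [show x ^ 2 + c = x ^ 2 * (1 + c / x ^ 2) by field_simp, sqrt_mul (sq_nonneg x),
    sqrt_sq hx.le, div_mul_cancel_left₀ hx.ne']

lemma tendsto_arsinh_sub_log_atTop :
    Tendsto (fun x : ℝ => arsinh x - log x) atTop (𝓝 (log 2)) := by
  have hinv : Tendsto (fun x : ℝ => (x / √(x ^ 2 + 1))⁻¹) atTop (𝓝 1) := by
    simpa using (tendsto_div_sqrt_sq_add_atTop 1).inv₀ one_ne_zero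
  have hlog : Tendsto (fun x : ℝ => log (1 + (x / √(x ^ 2 + 1))⁻¹)) atTop (𝓝 (log 2)) := by
    simpa [one_add_one_eq_two] using (hinv.const_add 1).log (by norm_num)
  refine hlog.congr' ?_
  filter_upwards [eventually_gt_atTop 0] with x hx
  have hsqrt : 0 < √(x ^ 2 + 1) := sqrt_pos.2 (by positivity)
  rw [arsinh, show x + √(1 + x ^ 2) = x * (1 + (x / √(x ^ 2 + 1))⁻¹) by
      rw [add_comm 1 (x ^ 2)]; field_simp,
    log_mul hx.ne' (by positivity)]
  ring

lemma tendsto_arsinh_div_sub_log_atTop {a : ℝ} (ha : 0 < a) :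
    Tendsto (fun x : ℝ => arsinh (x / a) - log x) atTop (𝓝 (log 2 - log a)) := by
  refine ((tendsto_arsinh_sub_log_atTop.comp (tendsto_id.atTop_div_const ha)).sub_const
    (log a)).congr' ?_
  filter_upwards [eventually_gt_atTop 0] with x hx
  simp only [Function.comp_apply, id, log_div hx.ne' ha.ne']
  ring

lemma tendsto_F_sub_log_atTop {Ψ : ℝ} (hΨ : Ψ ≠ 0) (y : ℝ) :
    Tendsto (fun x => F Ψ x y - log x) atTop
      (𝓝 (log 2 - log (Ψ ^ 2 + y ^ 2) / 2 + y / Ψ * arctan (y / Ψ))) := by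
  have hpos : 0 < Ψ ^ 2 + y ^ 2 := by positivity
  have harsinh := tendsto_arsinh_div_sub_log_atTop (sqrt_pos.2 hpos)
  rw [log_sqrt hpos.le] at harsinh
  have harctan : Tendsto (fun x => arctan (x * y / (Ψ * √(Ψ ^ 2 + x ^ 2 + y ^ 2)))) atTop
      (𝓝 (arctan (y / Ψ))) := by
    have h := (continuous_arctan.tendsto _).comp
      ((tendsto_div_sqrt_sq_add_atTop (Ψ ^ 2 + y ^ 2)).const_mul (y / Ψ))
    rw [mul_one] at h
    refine h.congr fun x => ?_
    rw [Function.comp_apply, show Ψ ^ 2 + x ^ 2 + y ^ 2 = x ^ 2 + (Ψ ^ 2 + y ^ 2) by ring]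
    congr 1
    ring
  refine (harsinh.add (harctan.const_mul (y / Ψ))).congr fun x => ?_
  simp only [F]
  ring

theorem stmt_11 (Ψ B₅ B₆ : ℝ) (hΨ : 0 < Ψ) :
    Filter.Tendsto (fun h : ℝ => F Ψ h B₅ - F Ψ h B₆) Filter.atTop
      (nhds ((1 / 2) * Real.log ((Ψ ^ 2 + B₆ ^ 2) / (Ψ ^ 2 + B₅ ^ 2))
        + (B₅ / Ψ) * Real.arctan (B₅ / Ψ) - (B₆ / Ψ) * Real.arctan (B₆ / Ψ))) := by
  convert (tendsto_F_sub_log_atTop hΨ.ne' B₅).sub (tendsto_F_sub_log_atTop hΨ.ne' B₆) using 2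
  · ring
  · rw [log_div (by positivity) (by positivity)]
    ring
end

section
/- Let Ψ > 0, κ₁ > 0, κ₂ > 0, and let a, B₃, B₄ be real numbers. Then, as t → +∞, the difference F(κ₁·t + a, κ₂·t + B₃) − F(κ₁·t + a, κ₂·t − B₄) converges to π·(B₃ + B₄)/(2Ψ). -/
/-!
`F` is homogeneous of degree zero in `(Ψ, x, y)`, so rescaling by `t⁻¹` turns `t → ∞` into
`Ψ → 0⁺` with `x → κ₁` and `y → κ₂`. There the argument of `arctan` blows up, and
`arctan z = π / 2 - arctan z⁻¹` splits `F` into `(y / Ψ) · π / 2` plus a remainder with a finite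
limit depending only on `(κ₁, κ₂)`: the `arsinh` term tends to `arsinh (κ₁ / κ₂)`, and since
`arctan u ~ u` the correction tends to `√(κ₁² + κ₂²) / κ₁`. The two remainders therefore cancel,
and the leading terms differ by exactly `(B₃ + B₄) / Ψ · π / 2`.
-/

open Real Filter

open Topology

lemma F_mul_mul_mul {c : ℝ} (hc : 0 < c) (Ψ x y : ℝ) : F (c * Ψ) (c * x) (c * y) = F Ψ x y := by
  have sqrt_mul_sq : ∀ q : ℝ, 0 ≤ q → √(c ^ 2 * q) = c * √q := fun q hq => by
    rw [Real.sqrt_mul (sq_nonneg c), Real.sqrt_sq hc.le]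
  have h₁ : √((c * Ψ) ^ 2 + (c * y) ^ 2) = c * √(Ψ ^ 2 + y ^ 2) := by
    rw [← sqrt_mul_sq _ (by positivity)]; ring_nf
  have h₂ : √((c * Ψ) ^ 2 + (c * x) ^ 2 + (c * y) ^ 2) = c * √(Ψ ^ 2 + x ^ 2 + y ^ 2) := by
    rw [← sqrt_mul_sq _ (by positivity)]; ring_nf
  have hc₀ : c ≠ 0 := hc.ne'
  simp only [F, h₁, h₂, mul_div_mul_left _ _ hc₀]
  congr 3
  rw [show c * x * (c * y) / (c * Ψ * (c * √(Ψ ^ 2 + x ^ 2 + y ^ 2)))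
      = (c * c) * (x * y) / ((c * c) * (Ψ * √(Ψ ^ 2 + x ^ 2 + y ^ 2))) by ring_nf,
    mul_div_mul_left _ _ (mul_ne_zero hc₀ hc₀)]

lemma F_eq_mul_pi_div_two_add_of_pos {ε x y : ℝ} (hε : 0 < ε) (hx : 0 < x) (hy : 0 < y) :
    F ε x y = y / ε * (π / 2) + arsinh (x / √(ε ^ 2 + y ^ 2))
      - y / ε * arctan (ε * √(ε ^ 2 + x ^ 2 + y ^ 2) / (x * y)) := by
  have hz : 0 < ε * √(ε ^ 2 + x ^ 2 + y ^ 2) / (x * y) := by positivity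
  rw [F, ← inv_div (ε * _), arctan_inv_of_pos hz]
  ring

lemma tendsto_arctan_div_self : Tendsto (fun u => arctan u / u) (𝓝[≠] 0) (𝓝 1) := by
  simpa [div_eq_inv_mul] using hasDerivAt_iff_tendsto_slope_zero.mp (hasDerivAt_arctan 0)

section Limits

variable {α : Type*} {l : Filter α} {ε x y : α → ℝ} {x₀ y₀ : ℝ}

lemma tendsto_div_mul_arctan (hε : Tendsto ε l (𝓝[>] 0)) (hx : Tendsto x l (𝓝 x₀))
    (hy : Tendsto y l (𝓝 y₀)) (hx₀ : 0 < x₀) (hy₀ : 0 < y₀) :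
    Tendsto (fun s => y s / ε s * arctan (ε s * √(ε s ^ 2 + x s ^ 2 + y s ^ 2) / (x s * y s))) l
      (𝓝 (√(x₀ ^ 2 + y₀ ^ 2) / x₀)) := by
  have hε₀ := tendsto_nhds_of_tendsto_nhdsWithin hε
  have hpos : ∀ᶠ s in l, 0 < ε s ∧ 0 < x s ∧ 0 < y s :=
    (hε.eventually self_mem_nhdsWithin).and
      ((hx.eventually (lt_mem_nhds hx₀)).and (hy.eventually (lt_mem_nhds hy₀)))
  have hr : Tendsto (fun s => √(ε s ^ 2 + x s ^ 2 + y s ^ 2)) l (𝓝 √(x₀ ^ 2 + y₀ ^ 2)) := by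
    simpa using (((hε₀.pow 2).add (hx.pow 2)).add (hy.pow 2)).sqrt
  have hu : Tendsto (fun s => ε s * √(ε s ^ 2 + x s ^ 2 + y s ^ 2) / (x s * y s)) l (𝓝[≠] 0) := by
    refine tendsto_nhdsWithin_iff.mpr ⟨?_, ?_⟩
    · simpa [Pi.div_def] using (hε₀.mul hr).div (hx.mul hy) (mul_pos hx₀ hy₀).ne'
    · filter_upwards [hpos] with s ⟨hεs, hxs, hys⟩
      exact (by positivity : (0 : ℝ) < _).ne'
  have h := (hr.div hx hx₀.ne').mul (tendsto_arctan_div_self.comp hu)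
  rw [mul_one] at h
  refine h.congr' ?_
  filter_upwards [hpos] with s ⟨hεs, hxs, hys⟩
  have hrs : 0 < √(ε s ^ 2 + x s ^ 2 + y s ^ 2) := by positivity
  simp only [Function.comp_apply, Pi.div_apply]
  field_simp

lemma tendsto_F_sub_mul_pi_div_two (hε : Tendsto ε l (𝓝[>] 0)) (hx : Tendsto x l (𝓝 x₀))
    (hy : Tendsto y l (𝓝 y₀)) (hx₀ : 0 < x₀) (hy₀ : 0 < y₀) :
    Tendsto (fun s => F (ε s) (x s) (y s) - y s / ε s * (π / 2)) l
      (𝓝 (arsinh (x₀ / y₀) - √(x₀ ^ 2 + y₀ ^ 2) / x₀)) := by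
  have harsinh :
      Tendsto (fun s => arsinh (x s / √(ε s ^ 2 + y s ^ 2))) l (𝓝 (arsinh (x₀ / y₀))) := by
    have h := (hx.div (((tendsto_nhds_of_tendsto_nhdsWithin hε).pow 2).add (hy.pow 2)).sqrt
      (by simp [Real.sqrt_sq hy₀.le, hy₀.ne'])).arsinh
    simpa [Real.sqrt_sq hy₀.le] using h
  refine (harsinh.sub (tendsto_div_mul_arctan hε hx hy hx₀ hy₀)).congr' ?_
  filter_upwards [hε.eventually self_mem_nhdsWithin, hx.eventually (lt_mem_nhds hx₀),
    hy.eventually (lt_mem_nhds hy₀)] with s hεs hxs hys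
  rw [F_eq_mul_pi_div_two_add_of_pos hεs hxs hys]
  ring

end Limits

theorem stmt_12 (Ψ κ₁ κ₂ a B₃ B₄ : ℝ) (hΨ : 0 < Ψ) (hκ₁ : 0 < κ₁) (hκ₂ : 0 < κ₂) :
    Filter.Tendsto
      (fun t : ℝ => F Ψ (κ₁ * t + a) (κ₂ * t + B₃) - F Ψ (κ₁ * t + a) (κ₂ * t - B₄))
      Filter.atTop (nhds (Real.pi * (B₃ + B₄) / (2 * Ψ))) := by
  have hscale : Tendsto (fun s : ℝ => Ψ * s) (𝓝[>] 0) (𝓝[>] 0) := by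
    refine tendsto_nhdsWithin_iff.mpr ⟨?_, ?_⟩
    · simpa using ((continuous_const_mul Ψ).tendsto 0).mono_left nhdsWithin_le_nhds
    · filter_upwards [self_mem_nhdsWithin] with s (hs : 0 < s) using mul_pos hΨ hs
  have hlin : ∀ c d : ℝ, Tendsto (fun s => c + d * s) (𝓝[>] 0) (𝓝 c) := fun c d =>
    ((continuous_const.add (continuous_const_mul d)).tendsto' 0 c (by simp)).mono_left
      nhdsWithin_le_nhds
  have hkey := fun B => tendsto_F_sub_mul_pi_div_two hscale (hlin κ₁ a) (hlin κ₂ B) hκ₁ hκ₂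
  have h := ((hkey B₃).sub (hkey (-B₄))).add_const (π * (B₃ + B₄) / (2 * Ψ))
  rw [sub_self, zero_add] at h
  refine (h.comp tendsto_inv_atTop_nhdsGT_zero).congr' ?_
  filter_upwards [eventually_gt_atTop 0] with t ht
  have hrescale :
      ∀ B, F (Ψ * t⁻¹) (κ₁ + a * t⁻¹) (κ₂ + B * t⁻¹) = F Ψ (κ₁ * t + a) (κ₂ * t + B) := fun B => by
    conv_rhs => rw [← F_mul_mul_mul (inv_pos.mpr ht)]
    congr 1 <;> field_simp
  simp only [Function.comp_apply, hrescale, sub_eq_add_neg _ B₄]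
  field_simp
  ring
end

section
/- Let Ψ > 0, κ₁ > 0, κ₂ > 0, and let u₋, u₊, a₀, Ω be real numbers with a₀ > 0. Then, as t → +∞, the eight-term bracket [ F(κ₁t + u₋, κ₂t + a₀ − Ω) − F(κ₁t + u₋, κ₂t − a₀ − Ω) + F(κ₁t + u₋, κ₂t + a₀ + Ω) − F(κ₁t + u₋, κ₂t − a₀ + Ω) + F(κ₁t + u₊, κ₂t + a₀ − Ω) − F(κ₁t + u₊, κ₂t − a₀ − Ω) + F(κ₁t + u₊, κ₂t + a₀ + Ω) − F(κ₁t + u₊, κ₂t − a₀ + Ω) ] converges to 4π·a₀/Ψ. -/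
/-!
Along `x, y → ∞` with `x / y → r > 0`, the argument `A` of the arctangent in `F Ψ x y` grows
linearly in `y`, and `π / 2 - arctan A ~ 1 / A`. Hence `F Ψ x y = π y / (2Ψ) + L r + o(1)` with a
constant `L r` depending only on `r`. In the bracket the second coordinates come in four pairs
differing by `2 a₀` with the same ratio `κ₁ / κ₂`, so the constants cancel and the linear parts
leave `4 · 2 a₀ · π / (2Ψ)`.
-/

open Real Filter

open Topology

theorem tendsto_mul_pi_div_two_sub_arctan :
    Tendsto (fun z : ℝ => z * (π / 2 - arctan z)) atTop (𝓝 1) := by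
  have hslope : Tendsto (fun w : ℝ => arctan w / w) (𝓝[≠] 0) (𝓝 1) := by
    have h := hasDerivAt_iff_tendsto_slope.mp (hasDerivAt_arctan 0)
    norm_num at h
    exact h.congr fun w => by simp [slope_def_field]
  have hinv : Tendsto (fun z : ℝ => z⁻¹) atTop (𝓝[≠] 0) :=
    tendsto_inv_atTop_nhdsGT_zero.mono_right (nhdsWithin_mono _ fun _ h => ne_of_gt h)
  refine (hslope.comp hinv).congr' ?_
  filter_upwards [eventually_gt_atTop 0] with z hz
  simp [arctan_inv_of_pos hz, div_eq_mul_inv, mul_comm]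

section Asymptotics

variable {α : Type*} {l : Filter α} {x y : α → ℝ}

theorem tendsto_div_sqrt_sq_add_sq (Ψ : ℝ) {r : ℝ} (hy : Tendsto y l atTop)
    (hxy : Tendsto (fun i => x i / y i) l (𝓝 r)) :
    Tendsto (fun i => x i / √(Ψ ^ 2 + y i ^ 2)) l (𝓝 r) := by
  have hΨy : Tendsto (fun i => Ψ / y i) l (𝓝 0) := tendsto_const_nhds.div_atTop hy
  have hsqrt : Tendsto (fun i => √((Ψ / y i) ^ 2 + 1)) l (𝓝 1) := by
    simpa using ((hΨy.pow 2).add_const 1).sqrt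
  have hlim : Tendsto (fun i => x i / y i / √((Ψ / y i) ^ 2 + 1)) l (𝓝 (r / 1)) :=
    hxy.div hsqrt one_ne_zero
  rw [div_one] at hlim
  refine hlim.congr' ?_
  filter_upwards [hy.eventually_gt_atTop 0] with i hi
  rw [show (Ψ / y i) ^ 2 + 1 = (Ψ ^ 2 + y i ^ 2) / y i ^ 2 by field_simp,
    sqrt_div' _ (sq_nonneg _), sqrt_sq hi.le, div_div_eq_mul_div, div_mul_cancel₀ _ hi.ne']

theorem tendsto_sqrt_sq_add_sq_add_sq_div (Ψ : ℝ) {s : ℝ} (hx : Tendsto x l atTop)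
    (hyx : Tendsto (fun i => y i / x i) l (𝓝 s)) :
    Tendsto (fun i => √(Ψ ^ 2 + x i ^ 2 + y i ^ 2) / x i) l (𝓝 √(1 + s ^ 2)) := by
  have hΨx : Tendsto (fun i => Ψ / x i) l (𝓝 0) := tendsto_const_nhds.div_atTop hx
  have hlim := (((hΨx.pow 2).add_const 1).add (hyx.pow 2)).sqrt
  rw [zero_pow two_ne_zero, zero_add] at hlim
  refine hlim.congr' ?_
  filter_upwards [hx.eventually_gt_atTop 0] with i hi
  rw [show (Ψ / x i) ^ 2 + 1 + (y i / x i) ^ 2 = (Ψ ^ 2 + x i ^ 2 + y i ^ 2) / x i ^ 2 by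
    field_simp, sqrt_div' _ (sq_nonneg _), sqrt_sq hi.le]

theorem tendsto_F_sub_mul_pi {Ψ r : ℝ} (hΨ : 0 < Ψ) (hr : 0 < r) (hy : Tendsto y l atTop)
    (hxy : Tendsto (fun i => x i / y i) l (𝓝 r)) :
    Tendsto (fun i => F Ψ (x i) (y i) - y i * π / (2 * Ψ)) l
      (𝓝 (arsinh r - √(1 + r⁻¹ ^ 2))) := by
  have hx : Tendsto x l atTop :=
    (hxy.pos_mul_atTop hr hy).congr' <| by
      filter_upwards [hy.eventually_gt_atTop 0] with i hi using div_mul_cancel₀ _ hi.ne'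
  have hyx : Tendsto (fun i => y i / x i) l (𝓝 r⁻¹) := by
    simpa only [inv_div] using hxy.inv₀ hr.ne'
  set S := fun i => √(Ψ ^ 2 + x i ^ 2 + y i ^ 2)
  have hS : Tendsto (fun i => S i / x i) l (𝓝 √(1 + r⁻¹ ^ 2)) :=
    tendsto_sqrt_sq_add_sq_add_sq_div Ψ hx hyx
  set A := fun i => x i * y i / (Ψ * S i)
  have hA : Tendsto A l atTop := by
    refine ((hS.inv₀ (by positivity)).pos_mul_atTop (by positivity)
      (hy.atTop_div_const hΨ)).congr fun i => ?_
    simp only [A, inv_div]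
    ring
  -- `y / Ψ = (S / x) * A`, and `A * (π / 2 - arctan A) → 1`.
  have htail : Tendsto (fun i => y i / Ψ * (π / 2 - arctan (A i))) l
      (𝓝 √(1 + r⁻¹ ^ 2)) := by
    have hlim := hS.mul (tendsto_mul_pi_div_two_sub_arctan.comp hA)
    rw [mul_one] at hlim
    refine hlim.congr' ?_
    filter_upwards [hx.eventually_gt_atTop 0] with i hi
    have : 0 < S i := by positivity
    simp only [Function.comp, A]
    field_simp
  refine ((continuous_arsinh.tendsto r).comp (tendsto_div_sqrt_sq_add_sq Ψ hy hxy)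
    |>.sub htail).congr fun i => ?_
  simp only [Function.comp, F, A, S]
  ring

end Asymptotics

theorem tendsto_affine_div_affine (a b c d : ℝ) (hc : 0 < c) :
    Tendsto (fun t => (a * t + b) / (c * t + d)) atTop (𝓝 (a / c)) := by
  have hden : Tendsto (fun t => c * t + d) atTop atTop :=
    tendsto_atTop_add_const_right _ d (tendsto_id.const_mul_atTop hc)
  have hlim := (tendsto_const_nhds (x := b - a * d / c)).div_atTop hden |>.const_add (a / c)
  rw [add_zero] at hlim
  refine hlim.congr' ?_
  filter_upwards [hden.eventually_gt_atTop 0] with t ht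
  field_simp
  ring

section Affine

variable {Ψ κ₁ κ₂ : ℝ}

theorem tendsto_F_affine_sub_mul_pi (hΨ : 0 < Ψ) (hκ₁ : 0 < κ₁) (hκ₂ : 0 < κ₂) (u c : ℝ) :
    Tendsto (fun t => F Ψ (κ₁ * t + u) (κ₂ * t + c) - (κ₂ * t + c) * π / (2 * Ψ)) atTop
      (𝓝 (arsinh (κ₁ / κ₂) - √(1 + (κ₁ / κ₂)⁻¹ ^ 2))) :=
  tendsto_F_sub_mul_pi hΨ (div_pos hκ₁ hκ₂)
    (tendsto_atTop_add_const_right _ c (tendsto_id.const_mul_atTop hκ₂))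
    (tendsto_affine_div_affine κ₁ u κ₂ c hκ₂)

theorem tendsto_F_affine_sub_F_affine (hΨ : 0 < Ψ) (hκ₁ : 0 < κ₁) (hκ₂ : 0 < κ₂)
    (u c c' : ℝ) :
    Tendsto (fun t => F Ψ (κ₁ * t + u) (κ₂ * t + c) - F Ψ (κ₁ * t + u) (κ₂ * t + c')) atTop
      (𝓝 ((c - c') * π / (2 * Ψ))) := by
  convert (tendsto_F_affine_sub_mul_pi hΨ hκ₁ hκ₂ u c).sub
    (tendsto_F_affine_sub_mul_pi hΨ hκ₁ hκ₂ u c') |>.add_const ((c - c') * π / (2 * Ψ))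
    using 2 with t
  · ring
  · ring

end Affine

theorem stmt_13_general (Ψ κ₁ κ₂ um up a₀ Ω : ℝ) (hΨ : 0 < Ψ) (hκ₁ : 0 < κ₁) (hκ₂ : 0 < κ₂) :
    Filter.Tendsto
      (fun t : ℝ =>
        F Ψ (κ₁ * t + um) (κ₂ * t + a₀ - Ω) - F Ψ (κ₁ * t + um) (κ₂ * t - a₀ - Ω)
          + F Ψ (κ₁ * t + um) (κ₂ * t + a₀ + Ω) - F Ψ (κ₁ * t + um) (κ₂ * t - a₀ + Ω)
          + F Ψ (κ₁ * t + up) (κ₂ * t + a₀ - Ω) - F Ψ (κ₁ * t + up) (κ₂ * t - a₀ - Ω)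
          + F Ψ (κ₁ * t + up) (κ₂ * t + a₀ + Ω) - F Ψ (κ₁ * t + up) (κ₂ * t - a₀ + Ω))
      Filter.atTop (nhds (4 * Real.pi * a₀ / Ψ)) := by
  have key := tendsto_F_affine_sub_F_affine hΨ hκ₁ hκ₂
  convert (((key um (a₀ - Ω) (-a₀ - Ω)).add (key um (a₀ + Ω) (-a₀ + Ω))).add
    (key up (a₀ - Ω) (-a₀ - Ω))).add (key up (a₀ + Ω) (-a₀ + Ω)) using 2 with t
  · ring_nf
  · ring

theorem stmt_13 (Ψ κ₁ κ₂ um up a₀ Ω : ℝ) (hΨ : 0 < Ψ) (hκ₁ : 0 < κ₁) (hκ₂ : 0 < κ₂)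
    (ha₀ : 0 < a₀) :
    Filter.Tendsto
      (fun t : ℝ =>
        F Ψ (κ₁ * t + um) (κ₂ * t + a₀ - Ω) - F Ψ (κ₁ * t + um) (κ₂ * t - a₀ - Ω)
          + F Ψ (κ₁ * t + um) (κ₂ * t + a₀ + Ω) - F Ψ (κ₁ * t + um) (κ₂ * t - a₀ + Ω)
          + F Ψ (κ₁ * t + up) (κ₂ * t + a₀ - Ω) - F Ψ (κ₁ * t + up) (κ₂ * t - a₀ - Ω)
          + F Ψ (κ₁ * t + up) (κ₂ * t + a₀ + Ω) - F Ψ (κ₁ * t + up) (κ₂ * t - a₀ + Ω))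
      Filter.atTop (nhds (4 * Real.pi * a₀ / Ψ)) :=
  stmt_13_general Ψ κ₁ κ₂ um up a₀ Ω hΨ hκ₁ hκ₂
end
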